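/- arXiv:1503.02482 — 2 statements merged into one kernel-verified Lean document; each statement's English description precedes it below -/
import Mathlib

section
/- Let (G,P,Δ) be a Garside group of finite type and let y ∈ G. Then y is absorbable if and only if y⁻¹ is absorbable, and this is also equivalent to τ(y) being absorbable and to τ(y⁻¹) being absorbable. Moreover, if x ∈ G absorbs y, then xy absorbs y⁻¹, and x and xy have the same inf and the same sup. -/
/-- A Garside group of finite type: a group `G` (the group of fractions of its positive
monoid `P`), with a Garside element `Δ`, together with the associated data (left gcds,
infimum, supremum, distinguished coset representatives) satisfying the Garside axioms.
Here `u ≼ v` (prefix order) is encoded by `u⁻¹ * v ∈ P` and `u` being a suffix of `v`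
by `v * u⁻¹ ∈ P`. -/
structure GarsideGroup (G : Type*) [Group G] where
  /-- the positive monoid, viewed inside its group of fractions -/
  P : Submonoid G
  /-- the Garside element -/
  Δ : G
  delta_pos : Δ ∈ P
  /-- `G` is the group of fractions of `P` -/
  fractions : ∀ x : G, ∃ p ∈ P, ∃ q ∈ P, x = p⁻¹ * q
  /-- atomicity: the lengths of decompositions of a positive element into nontrivial
  positive factors are bounded -/
  atomic : ∀ p ∈ P, ∃ N : ℕ,
    ∀ l : List G, (∀ a ∈ l, a ∈ P ∧ a ≠ 1) → l.prod = p → l.length ≤ N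
  /-- left gcds for the prefix order -/
  lgcd : G → G → G
  lgcd_dvd_left : ∀ a b : G, (lgcd a b)⁻¹ * a ∈ P
  lgcd_dvd_right : ∀ a b : G, (lgcd a b)⁻¹ * b ∈ P
  lgcd_greatest : ∀ a b c : G, c⁻¹ * a ∈ P → c⁻¹ * b ∈ P → c⁻¹ * lgcd a b ∈ P
  /-- left lcms exist -/
  llcm_exists : ∀ a b : G, ∃ m : G, a⁻¹ * m ∈ P ∧ b⁻¹ * m ∈ P ∧
    ∀ c : G, a⁻¹ * c ∈ P → b⁻¹ * c ∈ P → m⁻¹ * c ∈ P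
  /-- right gcds exist -/
  rgcd_exists : ∀ a b : G, ∃ d : G, a * d⁻¹ ∈ P ∧ b * d⁻¹ ∈ P ∧
    ∀ c : G, a * c⁻¹ ∈ P → b * c⁻¹ ∈ P → d * c⁻¹ ∈ P
  /-- right lcms exist -/
  rlcm_exists : ∀ a b : G, ∃ m : G, m * a⁻¹ ∈ P ∧ m * b⁻¹ ∈ P ∧
    ∀ c : G, c * a⁻¹ ∈ P → c * b⁻¹ ∈ P → c * m⁻¹ ∈ P
  /-- the left divisors of `Δ` coincide with its right divisors (the simple elements) -/
  simples_symm : ∀ s : G, (s ∈ P ∧ s⁻¹ * Δ ∈ P) ↔ (s ∈ P ∧ Δ * s⁻¹ ∈ P)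
  /-- finite type: there are only finitely many simple elements -/
  simples_finite : {s : G | s ∈ P ∧ s⁻¹ * Δ ∈ P}.Finite
  /-- the simple elements generate `P` -/
  simples_generate : ∀ p ∈ P, p ∈ Submonoid.closure {s : G | s ∈ P ∧ s⁻¹ * Δ ∈ P}
  /-- the infimum: `ginf x = max { r : ℤ | Δ^r ≼ x }` -/
  ginf : G → ℤ
  ginf_dvd : ∀ x : G, (Δ ^ ginf x)⁻¹ * x ∈ P
  ginf_max : ∀ (x : G) (r : ℤ), (Δ ^ r)⁻¹ * x ∈ P → r ≤ ginf x
  /-- the supremum: `gsup x = min { s : ℤ | x ≼ Δ^s }` -/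
  gsup : G → ℤ
  gsup_dvd : ∀ x : G, x⁻¹ * Δ ^ gsup x ∈ P
  gsup_min : ∀ (x : G) (s : ℤ), x⁻¹ * Δ ^ s ∈ P → gsup x ≤ s
  /-- each coset `gΔ^ℤ` has a unique distinguished representative, of infimum `0` -/
  rep : G ⧸ Subgroup.zpowers Δ → G
  rep_mem : ∀ v : G ⧸ Subgroup.zpowers Δ,
    (QuotientGroup.mk (rep v) : G ⧸ Subgroup.zpowers Δ) = v
  rep_inf : ∀ v : G ⧸ Subgroup.zpowers Δ, ginf (rep v) = 0
  rep_eq : ∀ x : G, ginf x = 0 → rep (QuotientGroup.mk x) = x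

namespace GarsideGroup

variable {G : Type*} [Group G]

/-- the prefix order: `u ≼ v` -/
def LDvd (g : GarsideGroup G) (u v : G) : Prop := u⁻¹ * v ∈ g.P

/-- the suffix order: `u` is a suffix of `v` -/
def RDvd (g : GarsideGroup G) (u v : G) : Prop := v * u⁻¹ ∈ g.P

/-- simple elements: positive left divisors of `Δ` -/
def Simple (g : GarsideGroup G) (s : G) : Prop := s ∈ g.P ∧ g.LDvd s g.Δ

/-- atoms of the positive monoid -/
def Atom (g : GarsideGroup G) (a : G) : Prop :=
  a ∈ g.P ∧ a ≠ 1 ∧ ∀ u v : G, u ∈ g.P → v ∈ g.P → a = u * v → u = 1 ∨ v = 1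

/-- the canonical length `ℓ(x) = sup(x) - inf(x)` -/
def ell (g : GarsideGroup G) (x : G) : ℤ := g.gsup x - g.ginf x

/-- the (powers of the) inner automorphism `τ(x) = Δ⁻¹ x Δ`: `tau k x = Δ^{-k} x Δ^k` -/
def tau (g : GarsideGroup G) (k : ℤ) (x : G) : G := g.Δ ^ (-k) * x * g.Δ ^ k

/-- the right complement `∂y = y⁻¹ Δ^{sup y}` -/
def comp (g : GarsideGroup G) (y : G) : G := y⁻¹ * g.Δ ^ g.gsup y

/-- `x` absorbs `y` -/
def Absorbs (g : GarsideGroup G) (x y : G) : Prop :=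
  g.ginf (x * y) = g.ginf x ∧ g.gsup (x * y) = g.gsup x

/-- absorbable elements -/
def Absorbable (g : GarsideGroup G) (y : G) : Prop :=
  (g.ginf y = 0 ∨ g.gsup y = 0) ∧ ∃ x : G, g.Absorbs x y

end GarsideGroup

namespace GarsideGroup

variable {G : Type*} [Group G] (g : GarsideGroup G)

lemma tau_simple {s : G} (hs : s ∈ g.P) (hd : s⁻¹ * g.Δ ∈ g.P) :
    g.Δ⁻¹ * s * g.Δ ∈ g.P := by
  have ht : (s⁻¹ * g.Δ) ∈ g.P ∧ g.Δ * (s⁻¹ * g.Δ)⁻¹ ∈ g.P := by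
    constructor
    · exact hd
    · have : g.Δ * (s⁻¹ * g.Δ)⁻¹ = s := by group
      rw [this]; exact hs
  have := (g.simples_symm (s⁻¹ * g.Δ)).mpr ht
  have h2 := this.2
  have : (s⁻¹ * g.Δ)⁻¹ * g.Δ = g.Δ⁻¹ * s * g.Δ := by group
  rwa [this] at h2

lemma taui_simple {s : G} (hs : s ∈ g.P) (hd : s⁻¹ * g.Δ ∈ g.P) :
    g.Δ * s * g.Δ⁻¹ ∈ g.P := by
  have hu := (g.simples_symm s).mp ⟨hs, hd⟩
  have hu1 : g.Δ * s⁻¹ ∈ g.P := hu.2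
  have hu2 : (g.Δ * s⁻¹)⁻¹ * g.Δ ∈ g.P := by
    have : (g.Δ * s⁻¹)⁻¹ * g.Δ = s := by group
    rw [this]; exact hs
  have := (g.simples_symm (g.Δ * s⁻¹)).mp ⟨hu1, hu2⟩
  have h2 := this.2
  have : g.Δ * (g.Δ * s⁻¹)⁻¹ = g.Δ * s * g.Δ⁻¹ := by group
  rwa [this] at h2

lemma tau_mem {p : G} (hp : p ∈ g.P) : g.Δ⁻¹ * p * g.Δ ∈ g.P := by
  have h := g.simples_generate p hp
  clear hp
  induction h using Submonoid.closure_induction with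
  | mem s hs => exact g.tau_simple hs.1 hs.2
  | one => simpa using g.P.one_mem
  | mul a b _ _ ha hb =>
      have : g.Δ⁻¹ * (a * b) * g.Δ = (g.Δ⁻¹ * a * g.Δ) * (g.Δ⁻¹ * b * g.Δ) := by group
      rw [this]; exact g.P.mul_mem ha hb

lemma taui_mem {p : G} (hp : p ∈ g.P) : g.Δ * p * g.Δ⁻¹ ∈ g.P := by
  have h := g.simples_generate p hp
  clear hp
  induction h using Submonoid.closure_induction with
  | mem s hs => exact g.taui_simple hs.1 hs.2
  | one => simpa using g.P.one_mem
  | mul a b _ _ ha hb =>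
      have : g.Δ * (a * b) * g.Δ⁻¹ = (g.Δ * a * g.Δ⁻¹) * (g.Δ * b * g.Δ⁻¹) := by group
      rw [this]; exact g.P.mul_mem ha hb

lemma conj_mem (k : ℤ) {p : G} (hp : p ∈ g.P) : g.Δ ^ (-k) * p * g.Δ ^ k ∈ g.P := by
  induction k using Int.induction_on with
  | zero => simpa using hp
  | succ n ih =>
      have : g.Δ ^ (-((n : ℤ) + 1)) * p * g.Δ ^ ((n : ℤ) + 1)
          = g.Δ⁻¹ * (g.Δ ^ (-(n : ℤ)) * p * g.Δ ^ (n : ℤ)) * g.Δ := by group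
      rw [this]; exact g.tau_mem ih
  | pred n ih =>
      have : g.Δ ^ (-(-(n : ℤ) - 1)) * p * g.Δ ^ (-(n : ℤ) - 1)
          = g.Δ * (g.Δ ^ (-(-(n : ℤ))) * p * g.Δ ^ (-(n : ℤ))) * g.Δ⁻¹ := by group
      rw [this]; exact g.taui_mem ih

lemma conj_iff (k : ℤ) (a : G) : g.Δ ^ (-k) * a * g.Δ ^ k ∈ g.P ↔ a ∈ g.P := by
  constructor
  · intro h
    have h2 := g.conj_mem (-k) h
    have : g.Δ ^ (-(-k)) * (g.Δ ^ (-k) * a * g.Δ ^ k) * g.Δ ^ (-k) = a := by group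
    rwa [this] at h2
  · exact g.conj_mem k

lemma swap_mem (k : ℤ) (a : G) : a * g.Δ ^ k ∈ g.P ↔ g.Δ ^ k * a ∈ g.P := by
  constructor
  · intro h
    have := (g.conj_iff (-k) (a * g.Δ ^ k)).mpr h
    have e : g.Δ ^ (-(-k)) * (a * g.Δ ^ k) * g.Δ ^ (-k) = g.Δ ^ k * a := by group
    rwa [e] at this
  · intro h
    have := (g.conj_iff k (g.Δ ^ k * a)).mpr h
    have e : g.Δ ^ (-k) * (g.Δ ^ k * a) * g.Δ ^ k = a * g.Δ ^ k := by group
    rwa [e] at this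

lemma ginf_inv (y : G) : g.ginf y⁻¹ = -g.gsup y := by
  apply le_antisymm
  · have h : (g.Δ ^ g.ginf y⁻¹)⁻¹ * y⁻¹ ∈ g.P := g.ginf_dvd y⁻¹
    have h' : y⁻¹ * g.Δ ^ (-(g.ginf y⁻¹)) ∈ g.P := by
      rw [g.swap_mem]
      have e : g.Δ ^ (-(g.ginf y⁻¹)) * y⁻¹ = (g.Δ ^ g.ginf y⁻¹)⁻¹ * y⁻¹ := by group
      rw [e]; exact h
    have := g.gsup_min y _ h'
    omega
  · have h := g.gsup_dvd y
    have h2 : g.Δ ^ (g.gsup y) * y⁻¹ ∈ g.P := (g.swap_mem _ _).mp h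
    have := g.ginf_max y⁻¹ (-(g.gsup y)) ?_
    · omega
    · have e : (g.Δ ^ (-g.gsup y))⁻¹ * y⁻¹ = g.Δ ^ (g.gsup y) * y⁻¹ := by group
      rw [e]; exact h2

lemma gsup_inv (y : G) : g.gsup y⁻¹ = -g.ginf y := by
  have h := g.ginf_inv y⁻¹
  rw [inv_inv] at h
  omega

lemma ginf_tau (k : ℤ) (y : G) : g.ginf (g.tau k y) = g.ginf y := by
  apply le_antisymm
  · have h := g.ginf_dvd (g.tau k y)
    have e : (g.Δ ^ (g.ginf (g.tau k y)))⁻¹ * g.tau k y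
        = g.Δ ^ (-k) * ((g.Δ ^ (g.ginf (g.tau k y)))⁻¹ * y) * g.Δ ^ k := by
      unfold tau; group
    rw [e, g.conj_iff] at h
    exact g.ginf_max y _ h
  · have h := g.ginf_dvd y
    have h2 : (g.Δ ^ (g.ginf y))⁻¹ * g.tau k y ∈ g.P := by
      have e : (g.Δ ^ (g.ginf y))⁻¹ * g.tau k y
          = g.Δ ^ (-k) * ((g.Δ ^ (g.ginf y))⁻¹ * y) * g.Δ ^ k := by
        unfold tau; group
      rw [e, g.conj_iff]; exact h
    exact g.ginf_max _ _ h2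

lemma gsup_tau (k : ℤ) (y : G) : g.gsup (g.tau k y) = g.gsup y := by
  apply le_antisymm
  · have h := g.gsup_dvd y
    have h2 : (g.tau k y)⁻¹ * g.Δ ^ (g.gsup y) ∈ g.P := by
      have e : (g.tau k y)⁻¹ * g.Δ ^ (g.gsup y)
          = g.Δ ^ (-k) * (y⁻¹ * g.Δ ^ (g.gsup y)) * g.Δ ^ k := by
        unfold tau; group
      rw [e, g.conj_iff]; exact h
    exact g.gsup_min _ _ h2
  · have h := g.gsup_dvd (g.tau k y)
    have e : (g.tau k y)⁻¹ * g.Δ ^ (g.gsup (g.tau k y))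
        = g.Δ ^ (-k) * (y⁻¹ * g.Δ ^ (g.gsup (g.tau k y))) * g.Δ ^ k := by
      unfold tau; group
    rw [e, g.conj_iff] at h
    exact g.gsup_min y _ h

lemma tau_mul (k : ℤ) (a b : G) : g.tau k a * g.tau k b = g.tau k (a * b) := by
  unfold tau; group

lemma tau_tau (y : G) : g.tau (-1) (g.tau 1 y) = y := by
  unfold tau; group

lemma absorbs_tau (k : ℤ) {x y : G} (h : g.Absorbs x y) :
    g.Absorbs (g.tau k x) (g.tau k y) := by
  obtain ⟨h1, h2⟩ := h
  constructor
  · rw [g.tau_mul, g.ginf_tau, g.ginf_tau, h1]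
  · rw [g.tau_mul, g.gsup_tau, g.gsup_tau, h2]

lemma absorbable_inv {y : G} (h : g.Absorbable y) : g.Absorbable y⁻¹ := by
  obtain ⟨h0, x, h1, h2⟩ := h
  refine ⟨?_, x * y, ?_, ?_⟩
  · rw [g.ginf_inv, g.gsup_inv]; omega
  · rw [mul_inv_cancel_right]; exact h1.symm
  · rw [mul_inv_cancel_right]; exact h2.symm

lemma absorbable_tau (k : ℤ) {y : G} (h : g.Absorbable y) : g.Absorbable (g.tau k y) := by
  obtain ⟨h0, x, hx⟩ := h
  exact ⟨by rw [g.ginf_tau, g.gsup_tau]; exact h0, g.tau k x, g.absorbs_tau k hx⟩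

lemma absorbable_tau_iff {y : G} : g.Absorbable y ↔ g.Absorbable (g.tau 1 y) := by
  constructor
  · exact g.absorbable_tau 1
  · intro h
    have := g.absorbable_tau (-1) h
    rwa [g.tau_tau] at this

lemma absorbable_inv_iff {y : G} : g.Absorbable y ↔ g.Absorbable y⁻¹ := by
  constructor
  · exact g.absorbable_inv
  · intro h
    have := g.absorbable_inv h
    rwa [inv_inv] at this

end GarsideGroup

/-- Lemma 2.3(ii) of the paper: `y` is absorbable iff `y⁻¹` is, iff
`τ(y)` is, iff `τ(y⁻¹)` is; moreover if `x` absorbs `y` then `xy` absorbs `y⁻¹`,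
and `x` and `xy` have the same infimum and supremum. -/
theorem GarsideGroup.absorbable_inv_tau {G : Type*} [Group G] (g : GarsideGroup G) (y : G) :
    (g.Absorbable y ↔ g.Absorbable y⁻¹) ∧
    (g.Absorbable y ↔ g.Absorbable (g.tau 1 y)) ∧
    (g.Absorbable y ↔ g.Absorbable (g.tau 1 y⁻¹)) ∧
    (∀ x : G, g.Absorbs x y →
      g.Absorbs (x * y) y⁻¹ ∧ g.ginf (x * y) = g.ginf x ∧ g.gsup (x * y) = g.gsup x) := by
  refine ⟨g.absorbable_inv_iff, g.absorbable_tau_iff, ?_, ?_⟩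
  · exact g.absorbable_inv_iff.trans g.absorbable_tau_iff
  · intro x hx
    obtain ⟨h1, h2⟩ := hx
    refine ⟨⟨?_, ?_⟩, h1, h2⟩
    · rw [mul_inv_cancel_right]; exact h1.symm
    · rw [mul_inv_cancel_right]; exact h2.symm
end

section
/- Let (G,P,Δ) be a Garside group of finite type. Preferred paths in the additional length complex C_AL(G) are symmetric: for any two vertices v, w of C_AL(G), the paths A(v,w) and A(w,v) have the same length and visit exactly the same vertices in reverse order; explicitly, writing v̄ = da, w̄ = db with d = v̄ ∧ w̄, a ∧ b = 1, r = sup(a), s = sup(b), for every 0 ≤ i ≤ r+s the element v̄(Δ^i ∧ ∂a·τ^r(b)) represents the same vertex as w̄(Δ^{r+s−i} ∧ ∂b·τ^s(a)). -/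
namespace GarsideGroup

variable {G : Type*} [Group G]

/-- the vertex set of the additional length complex: cosets `gΔ^ℤ` -/
abbrev Vertex (g : GarsideGroup G) : Type _ := G ⧸ Subgroup.zpowers g.Δ

/-- the vertex represented by a group element -/
def vtx (g : GarsideGroup G) (a : G) : Vertex g := QuotientGroup.mk a

/-- there is an edge from `v` to `w` labelled by a non-trivial, non-`Δ` simple element,
or by an absorbable element -/
def Step (g : GarsideGroup G) (v w : Vertex g) : Prop :=
  (∃ m : G, g.Simple m ∧ m ≠ 1 ∧ m ≠ g.Δ ∧ g.vtx (g.rep v * m) = w) ∨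
  (∃ y : G, g.Absorbable y ∧ g.vtx (g.rep v * y) = w)

/-- the additional length complex `C_AL(G)`, as a graph on `G/⟨Δ⟩` -/
def calGraph (g : GarsideGroup G) : SimpleGraph (Vertex g) where
  Adj v w := v ≠ w ∧ (g.Step v w ∨ g.Step w v)
  symm := ⟨fun _ _ h => ⟨h.1.symm, h.2.symm⟩⟩
  loopless := ⟨fun _ h => h.1 rfl⟩

/-- the additional length metric `d_AL`: the graph distance on `C_AL(G)` (each edge
having length `1`) -/
noncomputable def dAL (g : GarsideGroup G) (v w : Vertex g) : ℕ := (g.calGraph).dist v w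

/-- `l` is a left normal form (of the element `l.prod`, of infimum `0`): all factors are
simple, different from `1` and `Δ`, and each consecutive pair is left-weighted, i.e.
`l[i] = Δ ∧ (l[i] ⋯ l[r])` for all `i`. -/
def IsLNF (g : GarsideGroup G) (l : List G) : Prop :=
  (∀ s ∈ l, g.Simple s ∧ s ≠ 1 ∧ s ≠ g.Δ) ∧
  ∀ (i : ℕ) (h : i < l.length), ∀ c : G,
    g.LDvd c g.Δ → g.LDvd c (l.drop i).prod → g.LDvd c (l.get ⟨i, h⟩)

/-- `l` is a right normal form: all factors are simple, different from `1` and `Δ`, and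
`l[i] = (l[0] ⋯ l[i]) ∧↰ Δ` (right gcd) for all `i`. -/
def IsRNF (g : GarsideGroup G) (l : List G) : Prop :=
  (∀ s ∈ l, g.Simple s ∧ s ≠ 1 ∧ s ≠ g.Δ) ∧
  ∀ (i : ℕ) (h : i < l.length), ∀ c : G,
    g.RDvd c g.Δ → g.RDvd c (l.take (i + 1)).prod → g.RDvd c (l.get ⟨i, h⟩)

/-- the distinguished representative of the coset `(v̄⁻¹w̄)Δ^ℤ` -/
def relRep (g : GarsideGroup G) (v w : Vertex g) : G :=
  g.rep (g.vtx ((g.rep v)⁻¹ * g.rep w))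

/-- the vertices visited by the edge-path starting at `v` whose edges are labelled by
the entries of `l` -/
def pathVertices (g : GarsideGroup G) (v : Vertex g) (l : List G) : List (Vertex g) :=
  (List.range (l.length + 1)).map fun i => g.vtx (g.rep v * (l.take i).prod)

/-- `l` is the list of labels of the preferred path `A(v,w)`: the left normal form of the
distinguished representative of `(v̄⁻¹w̄)Δ^ℤ`.  The vertices visited by `A(v,w)` are then
`g.pathVertices v l`. -/
def IsPrefPath (g : GarsideGroup G) (v w : Vertex g) (l : List G) : Prop :=
  g.IsLNF l ∧ l.prod = g.relRep v w

end GarsideGroup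

namespace GarsideGroup

variable {G : Type*} [Group G] (g : GarsideGroup G)

theorem aux_eq_one {u : G} (hu : u ∈ g.P) (hu' : u⁻¹ ∈ g.P) : u = 1 := by
  by_contra h
  obtain ⟨N, hN⟩ := g.atomic u hu
  have key := hN (u :: (List.replicate N [u⁻¹, u]).flatten) ?_ ?_
  · simp at key
    omega
  · intro x hx
    simp [List.mem_flatten, List.mem_replicate] at hx
    rcases hx with rfl | ⟨-, rfl | rfl⟩
    · exact ⟨hu, h⟩
    · exact ⟨hu', by simpa using h⟩
    · exact ⟨hu, h⟩
  · simp [List.prod_flatten]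

theorem aux_lgcd_unique {u v c : G} (h1 : c⁻¹ * u ∈ g.P) (h2 : c⁻¹ * v ∈ g.P)
    (h3 : ∀ e : G, e⁻¹ * u ∈ g.P → e⁻¹ * v ∈ g.P → e⁻¹ * c ∈ g.P) :
    g.lgcd u v = c := by
  have hdc : (g.lgcd u v)⁻¹ * c ∈ g.P := h3 _ (g.lgcd_dvd_left u v) (g.lgcd_dvd_right u v)
  have hcd : c⁻¹ * g.lgcd u v ∈ g.P := g.lgcd_greatest u v c h1 h2
  have : (g.lgcd u v)⁻¹ * c = 1 := g.aux_eq_one hdc (by simpa using hcd)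
  rw [inv_mul_eq_one] at this
  exact this

theorem aux_lgcd_comm (u v : G) : g.lgcd u v = g.lgcd v u :=
  g.aux_lgcd_unique (g.lgcd_dvd_right v u) (g.lgcd_dvd_left v u)
    (fun e h1 h2 => g.lgcd_greatest v u e h2 h1)

theorem aux_lgcd_mul_left (x u v : G) : g.lgcd (x * u) (x * v) = x * g.lgcd u v := by
  refine g.aux_lgcd_unique ?_ ?_ ?_
  · have := g.lgcd_dvd_left u v
    have h : (x * g.lgcd u v)⁻¹ * (x * u) = (g.lgcd u v)⁻¹ * u := by group
    rwa [h]
  · have := g.lgcd_dvd_right u v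
    have h : (x * g.lgcd u v)⁻¹ * (x * v) = (g.lgcd u v)⁻¹ * v := by group
    rwa [h]
  · intro e h1 h2
    have h1' : (x⁻¹ * e)⁻¹ * u ∈ g.P := by
      have h : (x⁻¹ * e)⁻¹ * u = e⁻¹ * (x * u) := by group
      rwa [h]
    have h2' : (x⁻¹ * e)⁻¹ * v ∈ g.P := by
      have h : (x⁻¹ * e)⁻¹ * v = e⁻¹ * (x * v) := by group
      rwa [h]
    have := g.lgcd_greatest u v _ h1' h2'
    have h : (x⁻¹ * e)⁻¹ * g.lgcd u v = e⁻¹ * (x * g.lgcd u v) := by group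
    rwa [h] at this

theorem aux_tau_one {x : G} (hx : x ∈ g.P) : g.Δ⁻¹ * x * g.Δ ∈ g.P := by
  have h := g.simples_generate x hx
  have hle : Submonoid.closure {s : G | s ∈ g.P ∧ s⁻¹ * g.Δ ∈ g.P} ≤
      Submonoid.comap (MulAut.conj g.Δ⁻¹).toMonoidHom g.P := by
    rw [Submonoid.closure_le]
    rintro s ⟨hs1, hs2⟩
    have hs3 : g.Δ * (s⁻¹ * g.Δ)⁻¹ ∈ g.P := by
      have : g.Δ * (s⁻¹ * g.Δ)⁻¹ = s := by group
      rwa [this]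
    have := ((g.simples_symm (s⁻¹ * g.Δ)).mpr ⟨hs2, hs3⟩).2
    have he : (s⁻¹ * g.Δ)⁻¹ * g.Δ = g.Δ⁻¹ * s * g.Δ := by group
    rw [he] at this
    simpa [Submonoid.mem_comap, MulAut.conj] using this
  have := hle h
  simpa [Submonoid.mem_comap, MulAut.conj] using this

theorem aux_tau_inv {x : G} (hx : x ∈ g.P) : g.Δ * x * g.Δ⁻¹ ∈ g.P := by
  have h := g.simples_generate x hx
  have hle : Submonoid.closure {s : G | s ∈ g.P ∧ s⁻¹ * g.Δ ∈ g.P} ≤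
      Submonoid.comap (MulAut.conj g.Δ).toMonoidHom g.P := by
    rw [Submonoid.closure_le]
    rintro s ⟨hs1, hs2⟩
    have hp : g.Δ * s⁻¹ ∈ g.P := ((g.simples_symm s).mp ⟨hs1, hs2⟩).2
    have hp2 : (g.Δ * s⁻¹)⁻¹ * g.Δ ∈ g.P := by
      have : (g.Δ * s⁻¹)⁻¹ * g.Δ = s := by group
      rwa [this]
    have := ((g.simples_symm (g.Δ * s⁻¹)).mp ⟨hp, hp2⟩).2
    have he : g.Δ * (g.Δ * s⁻¹)⁻¹ = g.Δ * s * g.Δ⁻¹ := by group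
    rw [he] at this
    simpa [Submonoid.mem_comap, MulAut.conj] using this
  have := hle h
  simpa [Submonoid.mem_comap, MulAut.conj] using this

theorem aux_tau_zpow (k : ℤ) {x : G} (hx : x ∈ g.P) :
    g.Δ ^ (-k) * x * g.Δ ^ k ∈ g.P := by
  induction k using Int.induction_on with
  | zero => simpa using hx
  | succ n ih =>
      have h := g.aux_tau_one ih
      have he : g.Δ ^ (-((n : ℤ) + 1)) * x * g.Δ ^ ((n : ℤ) + 1)
          = g.Δ⁻¹ * (g.Δ ^ (-(n : ℤ)) * x * g.Δ ^ (n : ℤ)) * g.Δ := by group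
      rwa [he]
  | pred n ih =>
      have h := g.aux_tau_inv ih
      have he : g.Δ ^ (-(-(n : ℤ) - 1)) * x * g.Δ ^ (-(n : ℤ) - 1)
          = g.Δ * (g.Δ ^ (-(-(n : ℤ))) * x * g.Δ ^ (-(n : ℤ))) * g.Δ⁻¹ := by group
      rwa [he]

theorem aux_lgcd_mul_zpow (u v : G) (m : ℤ) :
    g.lgcd (u * g.Δ ^ m) (v * g.Δ ^ m) = g.lgcd u v * g.Δ ^ m := by
  refine g.aux_lgcd_unique ?_ ?_ ?_
  · have := g.aux_tau_zpow m (g.lgcd_dvd_left u v)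
    have h : (g.lgcd u v * g.Δ ^ m)⁻¹ * (u * g.Δ ^ m)
        = g.Δ ^ (-m) * ((g.lgcd u v)⁻¹ * u) * g.Δ ^ m := by group
    rwa [h]
  · have := g.aux_tau_zpow m (g.lgcd_dvd_right u v)
    have h : (g.lgcd u v * g.Δ ^ m)⁻¹ * (v * g.Δ ^ m)
        = g.Δ ^ (-m) * ((g.lgcd u v)⁻¹ * v) * g.Δ ^ m := by group
    rwa [h]
  · intro e h1 h2
    have h1' : (e * g.Δ ^ (-m))⁻¹ * u ∈ g.P := by
      have := g.aux_tau_zpow (-m) h1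
      have h : (e * g.Δ ^ (-m))⁻¹ * u
          = g.Δ ^ (-(-m)) * (e⁻¹ * (u * g.Δ ^ m)) * g.Δ ^ (-m) := by group
      rwa [h]
    have h2' : (e * g.Δ ^ (-m))⁻¹ * v ∈ g.P := by
      have := g.aux_tau_zpow (-m) h2
      have h : (e * g.Δ ^ (-m))⁻¹ * v
          = g.Δ ^ (-(-m)) * (e⁻¹ * (v * g.Δ ^ m)) * g.Δ ^ (-m) := by group
      rwa [h]
    have := g.aux_tau_zpow m (g.lgcd_greatest u v _ h1' h2')
    have h : e⁻¹ * (g.lgcd u v * g.Δ ^ m)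
        = g.Δ ^ (-m) * ((e * g.Δ ^ (-m))⁻¹ * g.lgcd u v) * g.Δ ^ m := by group
    rwa [h]

end GarsideGroup

/-- Lemma 2.10: preferred paths are symmetric: `A(v,w)` and `A(w,v)`
have the same length `r + s` and visit the same vertices in reverse order; explicitly,
writing `v̄ = da`, `w̄ = db` with `d = v̄ ∧ w̄`, `a ∧ b = 1`, `r = sup a`, `s = sup b`,
for `0 ≤ i ≤ r + s` the element `v̄(Δ^i ∧ ∂a·τ^r(b))` represents the same vertex as
`w̄(Δ^{r+s-i} ∧ ∂b·τ^s(a))`. -/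
theorem GarsideGroup.prefPath_symm {G : Type*} [Group G] (g : GarsideGroup G)
    (v w : GarsideGroup.Vertex g) (a b : G)
    (ha : g.rep v = g.lgcd (g.rep v) (g.rep w) * a)
    (hb : g.rep w = g.lgcd (g.rep v) (g.rep w) * b)
    (hab : g.lgcd a b = 1) :
    ∀ i : ℤ, 0 ≤ i → i ≤ g.gsup a + g.gsup b →
      g.vtx (g.rep v * g.lgcd (g.Δ ^ i) (g.comp a * g.tau (g.gsup a) b)) =
        g.vtx (g.rep w *
          g.lgcd (g.Δ ^ (g.gsup a + g.gsup b - i)) (g.comp b * g.tau (g.gsup b) a)) := by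
  intro i _ _
  set d := g.lgcd (g.rep v) (g.rep w) with hd
  set r := g.gsup a with hr
  set s := g.gsup b with hs
  have E1 : g.rep v * g.lgcd (g.Δ ^ i) (g.comp a * g.tau r b)
      = d * g.lgcd (a * g.Δ ^ i) (b * g.Δ ^ r) := by
    have hcta : g.comp a * g.tau r b = a⁻¹ * (b * g.Δ ^ r) := by
      simp only [GarsideGroup.comp, GarsideGroup.tau, ← hr]; group
    rw [hcta, ha, mul_assoc]
    congr 1
    rw [← g.aux_lgcd_mul_left a (g.Δ ^ i) (a⁻¹ * (b * g.Δ ^ r))]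
    congr 1
    group
  have E2 : g.rep w * g.lgcd (g.Δ ^ (r + s - i)) (g.comp b * g.tau s a)
      = d * g.lgcd (b * g.Δ ^ (r + s - i)) (a * g.Δ ^ s) := by
    have hctb : g.comp b * g.tau s a = b⁻¹ * (a * g.Δ ^ s) := by
      simp only [GarsideGroup.comp, GarsideGroup.tau, ← hs]; group
    rw [hctb, hb, mul_assoc]
    congr 1
    rw [← g.aux_lgcd_mul_left b (g.Δ ^ (r + s - i)) (b⁻¹ * (a * g.Δ ^ s))]
    congr 1
    group
  have E3 : g.lgcd (a * g.Δ ^ i) (b * g.Δ ^ r) * g.Δ ^ (s - i)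
      = g.lgcd (b * g.Δ ^ (r + s - i)) (a * g.Δ ^ s) := by
    rw [← g.aux_lgcd_mul_zpow (a * g.Δ ^ i) (b * g.Δ ^ r) (s - i)]
    rw [g.aux_lgcd_comm]
    congr 1
    · rw [mul_assoc, ← zpow_add]
      congr 1
      ring
    · rw [mul_assoc, ← zpow_add]
      congr 1
      ring
  show (QuotientGroup.mk _ : G ⧸ Subgroup.zpowers g.Δ) = QuotientGroup.mk _
  rw [QuotientGroup.eq]
  rw [E1, E2, ← E3]
  refine ⟨s - i, ?_⟩
  group
end
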